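/- Let n ∈ ℕ* and 0 < ε ≤ 1. Let E and F be normed vector spaces and U ⊆ E an open convex subset. Let f : U → F be n times continuously differentiable with successive derivatives f¹, …, fⁿ. Then f is almost Lip-(n+ε) on U (i.e. almost Lipschitz of degree n+ε on domains of size δ = ∞) if and only if the collection (f¹, f², …, fⁿ) is Lip-(n+ε−1) on U, and in that case ‖f‖_{∞,Lip-(n+ε)} = ‖f¹‖_{Lip-(n+ε−1)}. -/

import Mathlib

/-! Only the bound on `R₀` needs proof. Along the segment `u ↦ y + u (x - y)`, the function
`G u = ∑_{j<n} (1-u)ʲ/j! · fʲ(y + u(x-y))(x-y)^{⊗j} + (1-u)ⁿ/n! · fⁿ(y)(x-y)^{⊗n}`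
satisfies `G 1 = f⁰(x)`, while `G 0` is the Taylor polynomial of `f` at `y`. Differentiating,
everything telescopes except `(1-u)ⁿ⁻¹/(n-1)! · (fⁿ(y + u(x-y)) - fⁿ(y))(x-y)^{⊗n}`, whose norm is
at most `M ‖x - y‖^ε ‖x - y‖ⁿ` by the top-order remainder bound of `(f¹, …, fⁿ)`. The mean value
inequality then gives `‖R₀(x, y)‖ = ‖G 1 - G 0‖ ≤ M ‖x - y‖^γ`. -/

open Metric Set

noncomputable section

/-- The Taylor remainder of order `k` associated to the collection
`f = (f⁰, f¹, …, fⁿ)` (each `fᵏ` viewed as a continuous `k`-linear map),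
evaluated at the elementary tensor `v₁ ⊗ ⋯ ⊗ v_k`:
`Rₖ(x,y)(v) = fᵏ(x)(v) - ∑_{j=k}^{n} fʲ(y)(v ⊗ (x-y)^{⊗(j-k)}/(j-k)!)`. -/
def lipRemainder {E F : Type*} [NormedAddCommGroup E] [NormedSpace ℝ E]
    [NormedAddCommGroup F] [NormedSpace ℝ F]
    (n : ℕ) (f : ∀ k : ℕ, E → ContinuousMultilinearMap ℝ (fun _ : Fin k => E) F)
    (k : ℕ) (x y : E) (v : Fin k → E) : F :=
  f k x v - ∑ j ∈ Finset.range (n - k + 1),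
    ((j.factorial : ℝ)⁻¹) • f (k + j) y (Fin.append v fun _ : Fin j => x - y)

/-- The collection `(f^{k₀}, …, fⁿ)` satisfies the `Lip-γ` bounds with constant `M`
on `U`: each `fᵏ` is bounded by `M` (as a multilinear map) and each remainder of
order `k` is bounded by `M ‖x-y‖^{γ-k}` (times the norm of the tensor).
Taking `k₀ = 0` gives the usual notion of a `Lip-γ` collection; taking `k₀ = 1`
expresses that the shifted collection `(f¹, …, fⁿ)` is `Lip-(γ-1)`. -/
def IsLipCollBetween {E F : Type*} [NormedAddCommGroup E] [NormedSpace ℝ E]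
    [NormedAddCommGroup F] [NormedSpace ℝ F]
    (γ : ℝ) (k₀ n : ℕ) (M : ℝ)
    (f : ∀ k : ℕ, E → ContinuousMultilinearMap ℝ (fun _ : Fin k => E) F)
    (U : Set E) : Prop :=
  (∀ k, k₀ ≤ k → k ≤ n → ∀ x ∈ U, ∀ v : Fin k → E,
      ‖f k x v‖ ≤ M * ∏ i, ‖v i‖) ∧
  (∀ k, k₀ ≤ k → k ≤ n → ∀ x ∈ U, ∀ y ∈ U, ∀ v : Fin k → E,
      ‖lipRemainder n f k x y v‖ ≤ M * ‖x - y‖ ^ (γ - k) * ∏ i, ‖v i‖)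

/-- Each member of the collection takes values in the symmetric multilinear maps. -/
def IsSymmColl {E F : Type*} [NormedAddCommGroup E] [NormedSpace ℝ E]
    [NormedAddCommGroup F] [NormedSpace ℝ F]
    (n : ℕ)
    (f : ∀ k : ℕ, E → ContinuousMultilinearMap ℝ (fun _ : Fin k => E) F)
    (U : Set E) : Prop :=
  ∀ k, k ≤ n → ∀ x ∈ U, ∀ (σ : Equiv.Perm (Fin k)) (v : Fin k → E),
    f k x (v ∘ σ) = f k x v

open Finset Nat
open scoped ContDiff

section Taylor

variable {E F : Type*} [NormedAddCommGroup E] [NormedSpace ℝ E]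
  [NormedAddCommGroup F] [NormedSpace ℝ F]

theorem hasDerivAt_taylorWeight_succ (j : ℕ) (t : ℝ) :
    HasDerivAt (fun u : ℝ => ((j + 1)! : ℝ)⁻¹ * (1 - u) ^ (j + 1))
      (-((j ! : ℝ)⁻¹ * (1 - t) ^ j)) t := by
  refine ((((hasDerivAt_id t).const_sub 1).pow (j + 1)).const_mul _).congr_deriv ?_
  rw [Nat.factorial_succ]
  push_cast
  field_simp
  simp

theorem hasDerivWithinAt_taylorSum {g : ℕ → ℝ → F} {s : Set ℝ} {t : ℝ} (n : ℕ)
    (hg : ∀ j ≤ n, HasDerivWithinAt (g j) (g (j + 1) t) s t) :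
    HasDerivWithinAt (fun u => ∑ j ∈ range (n + 1), ((j ! : ℝ)⁻¹ * (1 - u) ^ j) • g j u)
      (((n ! : ℝ)⁻¹ * (1 - t) ^ n) • g (n + 1) t) s t := by
  induction n with
  | zero => simpa using hg 0 le_rfl
  | succ n ih =>
    have hlast := (hasDerivAt_taylorWeight_succ n t).hasDerivWithinAt.smul (hg (n + 1) le_rfl)
    convert (ih fun j hj => hg j (by omega)).add hlast using 1
    · ext u
      rw [sum_range_succ]
      rfl
    · rw [neg_smul]
      abel

theorem HasFTaylorSeriesUpToOn.hasDerivWithinAt_segment {N : ℕ∞ω} {f₀ : E → F}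
    {p : E → FormalMultilinearSeries ℝ E F} {U : Set E} (hp : HasFTaylorSeriesUpToOn N f₀ p U)
    (hU : Convex ℝ U) {x y : E} (hx : x ∈ U) (hy : y ∈ U) {j : ℕ} (hj : (j : ℕ∞ω) < N)
    {t : ℝ} (ht : t ∈ Icc (0 : ℝ) 1) :
    HasDerivWithinAt (fun u : ℝ => p (y + u • (x - y)) j fun _ => x - y)
      (p (y + t • (x - y)) (j + 1) fun _ => x - y) (Icc (0 : ℝ) 1) t := by
  have hline : HasDerivWithinAt (fun u : ℝ => y + u • (x - y)) (x - y) (Icc (0 : ℝ) 1) t := by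
    simpa using (((hasDerivAt_id t).smul_const (x - y)).const_add y).hasDerivWithinAt
  have hcomp := (hp.fderivWithin j hj _ (hU.add_smul_sub_mem hy hx ht)).comp_hasDerivWithinAt t
    hline fun u hu => hU.add_smul_sub_mem hy hx hu
  have happly := (ContinuousMultilinearMap.apply ℝ (fun _ : Fin j => E) F
    fun _ => x - y).hasFDerivAt.comp_hasDerivWithinAt t hcomp
  have hcons : (Fin.cons (x - y) fun _ : Fin j => x - y : Fin (j + 1) → E) = fun _ => x - y := by
    funext i
    refine Fin.cases ?_ ?_ i <;> simp
  simpa only [ContinuousMultilinearMap.apply_apply, Function.comp_def,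
    ContinuousMultilinearMap.curryLeft_apply, hcons] using happly

theorem HasFTaylorSeriesUpToOn.norm_sub_taylor_le_of_holder {f₀ : E → F}
    {p : E → FormalMultilinearSeries ℝ E F} {U : Set E} {n : ℕ} {ε M : ℝ} {x y : E}
    (hp : HasFTaylorSeriesUpToOn (n + 1 : ℕ) f₀ p U) (hU : Convex ℝ U) (hx : x ∈ U) (hy : y ∈ U)
    (hε : 0 ≤ ε) (hM : 0 ≤ M)
    (htop : ∀ z ∈ U, ∀ v : Fin (n + 1) → E,
      ‖p z (n + 1) v - p y (n + 1) v‖ ≤ M * ‖z - y‖ ^ ε * ∏ i, ‖v i‖) :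
    ‖f₀ x - ∑ j ∈ range (n + 2), (j ! : ℝ)⁻¹ • p y j (fun _ => x - y)‖
      ≤ M * ‖x - y‖ ^ (((n + 1 : ℕ) : ℝ) + ε) := by
  set c : ℝ → E := fun u => y + u • (x - y)
  set g : ℕ → ℝ → F := fun j u => p (c u) j fun _ => x - y
  set C : F := p y (n + 1) fun _ => x - y
  set G : ℝ → F := fun u => ∑ j ∈ range (n + 1), ((j ! : ℝ)⁻¹ * (1 - u) ^ j) • g j u
    + (((n + 1)! : ℝ)⁻¹ * (1 - u) ^ (n + 1)) • C
  have hG : ∀ t ∈ Icc (0 : ℝ) 1,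
      HasDerivWithinAt G (((n ! : ℝ)⁻¹ * (1 - t) ^ n) • (g (n + 1) t - C)) (Icc 0 1) t := by
    intro t ht
    have hsum := hasDerivWithinAt_taylorSum (g := g) n fun j hj =>
      hp.hasDerivWithinAt_segment hU hx hy (by exact_mod_cast Nat.lt_succ_of_le hj) ht
    have hweight := (hasDerivAt_taylorWeight_succ n t).hasDerivWithinAt (s := Icc 0 1)
    refine (hsum.add (hweight.smul_const C)).congr_deriv ?_
    rw [neg_smul, ← sub_eq_add_neg, smul_sub]
  have hbound : ∀ t ∈ Ico (0 : ℝ) 1, ‖((n ! : ℝ)⁻¹ * (1 - t) ^ n) • (g (n + 1) t - C)‖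
      ≤ M * ‖x - y‖ ^ (((n + 1 : ℕ) : ℝ) + ε) := by
    rintro t ⟨ht0, ht1⟩
    have h1t : 0 ≤ 1 - t := by linarith
    have hweight₀ : 0 ≤ (n ! : ℝ)⁻¹ * (1 - t) ^ n := by positivity
    have hweight₁ : (n ! : ℝ)⁻¹ * (1 - t) ^ n ≤ 1 :=
      mul_le_one₀ (inv_le_one_of_one_le₀ (Nat.one_le_cast.2 n.factorial_pos)) (by positivity)
        (pow_le_one₀ h1t (by linarith))
    have hct : ‖c t - y‖ ≤ ‖x - y‖ := by
      simp only [c, add_sub_cancel_left, norm_smul, Real.norm_of_nonneg ht0]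
      exact mul_le_of_le_one_left (norm_nonneg _) ht1.le
    have hcU : c t ∈ U := hU.add_smul_sub_mem hy hx ⟨ht0, ht1.le⟩
    calc ‖((n ! : ℝ)⁻¹ * (1 - t) ^ n) • (g (n + 1) t - C)‖
        ≤ 1 * (M * ‖c t - y‖ ^ ε * ∏ _i : Fin (n + 1), ‖x - y‖) := by
          rw [norm_smul, Real.norm_of_nonneg hweight₀]
          exact mul_le_mul hweight₁ (htop _ hcU _) (norm_nonneg _) zero_le_one
      _ ≤ M * ‖x - y‖ ^ ε * ‖x - y‖ ^ (n + 1) := by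
          rw [one_mul, prod_const, Finset.card_univ, Fintype.card_fin]
          gcongr
      _ = M * ‖x - y‖ ^ (((n + 1 : ℕ) : ℝ) + ε) := by
          rw [Real.rpow_add_of_nonneg (norm_nonneg _) (Nat.cast_nonneg _) hε, Real.rpow_natCast]
          ring
  have hG₁ : G 1 = f₀ x := by
    rw [← hp.zero_eq x hx]
    simp only [G, g, c, sum_range_succ', sub_self, zero_pow (Nat.succ_ne_zero _), mul_zero,
      zero_smul, sum_const_zero, zero_add, add_zero, factorial_zero, cast_one, inv_one, pow_zero,
      mul_one, one_smul, add_sub_cancel, ContinuousMultilinearMap.curry0_apply]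
    exact congrArg _ (Subsingleton.elim _ _)
  have hG₀ : G 0 = ∑ j ∈ range (n + 2), (j ! : ℝ)⁻¹ • p y j (fun _ => x - y) := by
    simp only [G, g, c, C, sub_zero, one_pow, mul_one, zero_smul, add_zero]
    rw [sum_range_succ _ (n + 1)]
  rw [← hG₁, ← hG₀]
  exact norm_image_sub_le_of_norm_deriv_le_segment_01' hG hbound

end Taylor

section LipRemainder

variable {E F : Type*} [NormedAddCommGroup E] [NormedSpace ℝ E]
  [NormedAddCommGroup F] [NormedSpace ℝ F]
  (f : ∀ k : ℕ, E → ContinuousMultilinearMap ℝ (fun _ : Fin k => E) F)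

theorem apply_comp_finCast (z : E) {a b : ℕ} (h : a = b) (v : Fin b → E) :
    f a z (v ∘ Fin.cast h) = f b z v := by
  subst h
  rfl

theorem lipRemainder_self (n : ℕ) (x y : E) (v : Fin n → E) :
    lipRemainder n f n x y v = f n x v - f n y v := by
  simp only [lipRemainder, Nat.sub_self, zero_add, sum_range_one, factorial_zero, cast_one,
    inv_one, one_smul]
  rw [Subsingleton.elim (fun _ : Fin 0 => x - y) Fin.elim0, Fin.append_elim0,
    apply_comp_finCast]

theorem lipRemainder_zero (n : ℕ) (x y : E) :
    lipRemainder n f 0 x y 0 =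
      f 0 x 0 - ∑ j ∈ range (n + 1), (j ! : ℝ)⁻¹ • f j y (fun _ => x - y) := by
  simp only [lipRemainder, Nat.sub_zero]
  congr 1
  refine sum_congr rfl fun j _ => ?_
  rw [Subsingleton.elim (0 : Fin 0 → E) Fin.elim0, Fin.elim0_append, apply_comp_finCast]

variable {f}

theorem IsLipCollBetween.norm_lipRemainder_zero_le {n : ℕ} {ε γ M : ℝ} {U : Set E} {x y : E}
    (hn : 1 ≤ n) (hε : 0 ≤ ε) (hγ : γ = n + ε) (hU : Convex ℝ U)
    (hdiff : HasFTaylorSeriesUpToOn (n : ℕ) (fun x => f 0 x 0) (fun x k => f k x) U)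
    (hM : 0 ≤ M) (hcoll : IsLipCollBetween γ 1 n M f U) (hx : x ∈ U) (hy : y ∈ U) :
    ‖lipRemainder n f 0 x y 0‖ ≤ M * ‖x - y‖ ^ γ := by
  obtain ⟨m, rfl⟩ : ∃ m, n = m + 1 := ⟨n - 1, by omega⟩
  subst hγ
  rw [lipRemainder_zero]
  refine hdiff.norm_sub_taylor_le_of_holder hU hx hy hε hM fun z hz v => ?_
  simpa only [lipRemainder_self, add_sub_cancel_left] using hcoll.2 (m + 1) hn le_rfl z hz y hy v

end LipRemainder

theorem statement5_general {E F : Type*} [NormedAddCommGroup E] [NormedSpace ℝ E]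
    [NormedAddCommGroup F] [NormedSpace ℝ F]
    (n : ℕ) (hn : 1 ≤ n) (ε γ : ℝ) (hε0 : 0 < ε) (hγ : γ = n + ε)
    (U : Set E) (hconv : Convex ℝ U)
    (f : ∀ k : ℕ, E → ContinuousMultilinearMap ℝ (fun _ : Fin k => E) F)
    (hdiff : HasFTaylorSeriesUpToOn (n : ℕ) (fun x => f 0 x 0) (fun x k => f k x) U) :
    ((∃ M : ℝ, 0 ≤ M ∧ IsLipCollBetween γ 1 n M f U ∧
        ∀ x ∈ U, ∀ y ∈ U, ‖lipRemainder n f 0 x y 0‖ ≤ M * ‖x - y‖ ^ γ) ↔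
      (∃ M : ℝ, 0 ≤ M ∧ IsLipCollBetween γ 1 n M f U)) ∧
    (∀ M : ℝ, 0 ≤ M → IsLipCollBetween γ 1 n M f U →
      ∀ x ∈ U, ∀ y ∈ U, ‖lipRemainder n f 0 x y 0‖ ≤ M * ‖x - y‖ ^ γ) := by
  have key : ∀ M : ℝ, 0 ≤ M → IsLipCollBetween γ 1 n M f U →
      ∀ x ∈ U, ∀ y ∈ U, ‖lipRemainder n f 0 x y 0‖ ≤ M * ‖x - y‖ ^ γ :=
    fun _ hM hcoll _ hx _ hy => hcoll.norm_lipRemainder_zero_le hn hε0.le hγ hconv hdiff hM hx hy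
  exact ⟨⟨fun ⟨M, hM, hcoll, _⟩ => ⟨M, hM, hcoll⟩, fun ⟨M, hM, hcoll⟩ => ⟨M, hM, hcoll, key M hM hcoll⟩⟩,
    key⟩

/-- **Criterion for almost Lipschitz maps on open convex sets** (Lemma 2.7).
Let `γ = n + ε` with `n ≥ 1`, `U` open and convex, and let `f⁰` be `n` times
continuously differentiable on `U` with successive derivatives `f¹,…,fⁿ`
(expressed via `HasFTaylorSeriesUpToOn`).  Then `f` is almost Lip-γ on `U`
(i.e. the shifted collection `(f¹,…,fⁿ)` is Lip-(γ-1) and the order-0 remainder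
`R₀` is bounded by `M‖x-y‖^γ`) iff `(f¹,…,fⁿ)` is Lip-(γ-1) on `U`;
moreover the norms coincide: any constant for `(f¹,…,fⁿ)` is also a constant
for the remainder `R₀`. -/
theorem statement5 {E F : Type*} [NormedAddCommGroup E] [NormedSpace ℝ E]
    [NormedAddCommGroup F] [NormedSpace ℝ F]
    (n : ℕ) (hn : 1 ≤ n) (ε γ : ℝ) (hε0 : 0 < ε) (hε1 : ε ≤ 1) (hγ : γ = n + ε)
    (U : Set E) (hU : IsOpen U) (hconv : Convex ℝ U)
    (f : ∀ k : ℕ, E → ContinuousMultilinearMap ℝ (fun _ : Fin k => E) F)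
    (hsymm : IsSymmColl n f U)
    (hdiff : HasFTaylorSeriesUpToOn (n : ℕ) (fun x => f 0 x 0) (fun x k => f k x) U) :
    ((∃ M : ℝ, 0 ≤ M ∧ IsLipCollBetween γ 1 n M f U ∧
        ∀ x ∈ U, ∀ y ∈ U, ‖lipRemainder n f 0 x y 0‖ ≤ M * ‖x - y‖ ^ γ) ↔
      (∃ M : ℝ, 0 ≤ M ∧ IsLipCollBetween γ 1 n M f U)) ∧
    (∀ M : ℝ, 0 ≤ M → IsLipCollBetween γ 1 n M f U →
      ∀ x ∈ U, ∀ y ∈ U, ‖lipRemainder n f 0 x y 0‖ ≤ M * ‖x - y‖ ^ γ) :=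
  statement5_general n hn ε γ hε0 hγ U hconv f hdiff

end
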